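/- arXiv:2309.09222 — 2 statements merged into one kernel-verified Lean document; each statement's English description precedes it below -/
import Mathlib

section
/- Let g : ℝᵈ → ℝᵈ be a planar flow, g(x) = x + u·h(⟨w,x⟩ + b), where h : ℝ → ℝ is differentiable with 0 ≤ h′(t) ≤ 1 for all t, and suppose ⟨u,w⟩ > −1. Then g is a bijection of ℝᵈ. -/
open Matrix Filter

/-- Invertibility of the planar flow: if `h` is differentiable with `0 ≤ h′ ≤ 1` and
`⟨u,w⟩ > −1`, then `g x = x + h(⟨w,x⟩ + b) • u` is a bijection of `ℝᵈ`. -/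
theorem stmt6 {d : ℕ} (u w : Fin d → ℝ) (b : ℝ)
    (h : ℝ → ℝ) (hh : Differentiable ℝ h)
    (hh' : ∀ t : ℝ, 0 ≤ deriv h t ∧ deriv h t ≤ 1)
    (huw : u ⬝ᵥ w > -1)
    (g : (Fin d → ℝ) → (Fin d → ℝ))
    (hg : ∀ x, g x = x + h (w ⬝ᵥ x + b) • u) :
    Function.Bijective g := by
  set c : ℝ := w ⬝ᵥ u with hc
  have hc1 : c > -1 := by rwa [hc, dotProduct_comm]
  set F : ℝ → ℝ := fun s => s + c * h (s + b) with hF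
  have hF' : ∀ s : ℝ, HasDerivAt F (1 + c * (deriv h (s + b) * 1)) s := by
    intro s
    exact (hasDerivAt_id s).add
      ((((hh (s + b)).hasDerivAt).comp s ((hasDerivAt_id s).add_const b)).const_mul c)
  -- F is strictly monotone
  have hFmono : StrictMono F := by
    apply strictMono_of_deriv_pos
    intro s
    rw [(hF' s).deriv]
    rcases le_or_gt 0 c with h0 | h0
    · nlinarith [(hh' (s + b)).1, (hh' (s + b)).2]
    · nlinarith [(hh' (s + b)).1, (hh' (s + b)).2]
  -- h is monotone, and s ↦ s - h (s+b) is monotone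
  have hhmono : Monotone h := by
    apply monotone_of_deriv_nonneg hh
    intro t; exact (hh' t).1
  have hM : Monotone (fun s : ℝ => s - h (s + b)) := by
    apply monotone_of_deriv_nonneg
    · exact fun s => (differentiable_id.sub ((hh.comp (differentiable_id.add_const b)))) s
    · intro s
      have hd : HasDerivAt (fun s : ℝ => s - h (s + b)) (1 - deriv h (s + b) * 1) s :=
        (hasDerivAt_id s).sub
          (((hh (s + b)).hasDerivAt).comp s ((hasDerivAt_id s).add_const b))
      rw [hd.deriv]
      have := (hh' (s + b)).2
      linarith
  set m : ℝ := min c 0 with hm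
  have hm1 : 1 + m > 0 := by
    rcases le_or_gt c 0 with h0 | h0
    · rw [hm, min_eq_left h0]; linarith
    · rw [hm, min_eq_right h0.le]; linarith
  have hlow : ∀ s : ℝ, 0 ≤ s → (1 + m) * s + c * h b ≤ F s := by
    intro s hs
    have hmono := hhmono (by linarith : b ≤ s + b)
    have hMs := hM hs
    simp only at hMs
    rcases le_or_gt 0 c with h0 | h0
    · rw [hm, min_eq_right h0]; simp only [hF]; nlinarith
    · rw [hm, min_eq_left h0.le]; simp only [hF]
      have : h (s + b) ≤ s + h b := by
        have : (0:ℝ) - h (0 + b) ≤ s - h (s + b) := hMs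
        simp at this; linarith
      nlinarith
  have hhigh : ∀ s : ℝ, s ≤ 0 → F s ≤ (1 + m) * s + c * h b := by
    intro s hs
    have hmono := hhmono (by linarith : s + b ≤ b)
    have hMs := hM hs
    simp only at hMs
    rcases le_or_gt 0 c with h0 | h0
    · rw [hm, min_eq_right h0]; simp only [hF]; nlinarith
    · rw [hm, min_eq_left h0.le]; simp only [hF]
      have : s + h b ≤ h (s + b) := by
        have : s - h (s + b) ≤ (0:ℝ) - h (0 + b) := hMs
        simp at this; linarith
      nlinarith
  have hcont : Continuous F := by
    exact continuous_id.add (continuous_const.mul (hh.continuous.comp (continuous_id.add continuous_const)))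
  have hlin_top : Tendsto (fun s : ℝ => (1 + m) * s + c * h b) atTop atTop :=
    (tendsto_id.const_mul_atTop hm1).atTop_add tendsto_const_nhds
  have hlin_bot : Tendsto (fun s : ℝ => (1 + m) * s + c * h b) atBot atBot :=
    ((tendsto_const_mul_atBot_of_pos hm1).mpr tendsto_id).atBot_add tendsto_const_nhds
  have htop : Tendsto F atTop atTop :=
    tendsto_atTop_mono' atTop
      ((eventually_ge_atTop (0:ℝ)).mono fun s hs => hlow s hs) hlin_top
  have hbot : Tendsto F atBot atBot :=
    tendsto_atBot_mono' atBot
      ((eventually_le_atBot (0:ℝ)).mono fun s hs => hhigh s hs) hlin_bot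
  have hFsurj : Function.Surjective F := hcont.surjective htop hbot
  -- key: w ⬝ᵥ g x = F (w ⬝ᵥ x)
  have hkey : ∀ x, w ⬝ᵥ g x = F (w ⬝ᵥ x) := by
    intro x
    rw [hg]
    simp [hF, dotProduct_add, dotProduct_smul, smul_eq_mul, mul_comm]
    exact Or.inl hc.symm
  constructor
  · intro x y hxy
    have h1 : F (w ⬝ᵥ x) = F (w ⬝ᵥ y) := by rw [← hkey, ← hkey, hxy]
    have h2 : w ⬝ᵥ x = w ⬝ᵥ y := hFmono.injective h1
    have h3 := hg x
    have h4 := hg y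
    rw [hxy, h4] at h3
    rw [h2] at h3
    exact add_right_cancel h3.symm
  · intro y
    obtain ⟨s, hs⟩ := hFsurj (w ⬝ᵥ y)
    refine ⟨y - h (s + b) • u, ?_⟩
    have hwx : w ⬝ᵥ (y - h (s + b) • u) = s := by
      have : w ⬝ᵥ y = s + c * h (s + b) := hs.symm
      simp [dotProduct_sub, dotProduct_smul, smul_eq_mul, this]
      ring
    rw [hg, hwx]
    abel
end

section
/- Let h : ℝ → ℝ be differentiable with 0 ≤ h′(t) ≤ 1 for all t ∈ ℝ, let c > −1 and b ∈ ℝ, and define F : ℝ → ℝ by F(t) = t + c·h(t + b). Then F is strictly monotone increasing and surjective onto ℝ; in particular, F is a bijection of ℝ. -/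
/-- One-dimensional invertibility lemma for planar flows: if `h` is differentiable with
`0 ≤ h′ ≤ 1` and `c > −1`, then `F t = t + c * h (t + b)` is strictly monotone increasing
and surjective onto `ℝ`; in particular it is a bijection of `ℝ`. -/
theorem stmt7 (h : ℝ → ℝ) (hh : Differentiable ℝ h)
    (hh' : ∀ t : ℝ, 0 ≤ deriv h t ∧ deriv h t ≤ 1)
    (c : ℝ) (hc : c > -1) (b : ℝ)
    (F : ℝ → ℝ) (hF : ∀ t, F t = t + c * h (t + b)) :
    StrictMono F ∧ Function.Surjective F ∧ Function.Bijective F := by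
  have hFeq : F = fun t => t + c * h (t + b) := funext hF
  set m : ℝ := min 1 (1 + c) with hm
  have hm0 : 0 < m := lt_min one_pos (by linarith)
  have hd : ∀ t : ℝ, HasDerivAt F (1 + c * deriv h (t + b)) t := by
    intro t
    rw [hFeq]
    have h1 : HasDerivAt (fun t : ℝ => t + b) 1 t := by
      simpa using (hasDerivAt_id t).add_const b
    have h2 : HasDerivAt (fun t : ℝ => h (t + b)) (deriv h (t + b) * 1) t :=
      ((hh (t + b)).hasDerivAt).comp t h1
    have := (hasDerivAt_id' (x := t)).add (h2.const_mul c); rw [mul_one] at this; exact this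
  have hlb : ∀ t : ℝ, m ≤ 1 + c * deriv h (t + b) := by
    intro t
    obtain ⟨h0, h1⟩ := hh' (t + b)
    rcases le_or_gt 0 c with hc0 | hc0
    · calc m ≤ 1 := min_le_left _ _
        _ ≤ 1 + c * deriv h (t + b) := by nlinarith
    · calc m ≤ 1 + c := min_le_right _ _
        _ ≤ 1 + c * deriv h (t + b) := by nlinarith
  have hmono : StrictMono F := by
    apply strictMono_of_deriv_pos
    intro t
    rw [(hd t).deriv]
    linarith [hlb t]
  have hcont : Continuous F := by
    rw [hFeq]
    exact continuous_id.add (continuous_const.mul (hh.continuous.comp (by continuity)))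
  -- F t ≥ F 0 + m * t for t ≥ 0, and ≤ for t ≤ 0, via monotonicity of G t = F t - m * t
  have hG : Monotone (fun t => F t - m * t) := by
    apply monotone_of_deriv_nonneg
    · exact (Differentiable.sub (fun t => (hd t).differentiableAt) (by fun_prop))
    · intro t
      have : HasDerivAt (fun t => F t - m * t) (1 + c * deriv h (t + b) - m) t :=
        (hd t).sub ((hasDerivAt_id t).const_mul m |>.congr_deriv (by ring))
      rw [this.deriv]
      linarith [hlb t]
  have htop : Filter.Tendsto F Filter.atTop Filter.atTop := by
    apply Filter.tendsto_atTop_mono' _ (f₁ := fun t => F 0 + m * t) ?_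
    · exact Filter.tendsto_atTop_add_const_left _ _ (Filter.tendsto_id.const_mul_atTop hm0)
    · filter_upwards [Filter.eventually_ge_atTop (0:ℝ)] with t ht
      have := hG ht
      simp only at this; nlinarith
  have hbot : Filter.Tendsto F Filter.atBot Filter.atBot := by
    apply Filter.tendsto_atBot_mono' _ (f₁ := fun t => F 0 + m * t) ?_
    · exact Filter.tendsto_atBot_add_const_left _ _ (Filter.tendsto_id.const_mul_atBot hm0)
    · filter_upwards [Filter.eventually_le_atBot (0:ℝ)] with t ht
      have := hG ht
      simp only at this; nlinarith
  have hsurj : Function.Surjective F := by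
    intro y
    obtain ⟨a, ha⟩ := (htop.eventually_ge_atTop y).exists
    obtain ⟨a', ha'⟩ := (hbot.eventually_le_atBot y).exists
    obtain ⟨x, _, hx⟩ := intermediate_value_uIcc (a := a') (b := a) hcont.continuousOn
      (show y ∈ Set.uIcc (F a') (F a) from Set.mem_uIcc.2 (Or.inl ⟨ha', ha⟩))
    exact ⟨x, hx⟩
  exact ⟨hmono, hsurj, hmono.injective, hsurj⟩
end
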